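/- arXiv:1203.2015 — 2 statements merged into one kernel-verified Lean document; each statement's English description precedes it below -/
import Mathlib

section
/- The Petersen graph has no proper 3-edge-coloring. -/
open SimpleGraph

/-- A proper 3-edge-coloring of `G`: distinct edges of `G` sharing a vertex get distinct colors. -/
def IsProper3EdgeColoring {V : Type*} (G : SimpleGraph V) (phi : Sym2 V → Fin 3) : Prop :=
  ∀ e₁ ∈ G.edgeSet, ∀ e₂ ∈ G.edgeSet, e₁ ≠ e₂ → (∃ v, v ∈ e₁ ∧ v ∈ e₂) → phi e₁ ≠ phi e₂

/-- `G` is cubic: every vertex has exactly 3 neighbors. -/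
def IsCubic {V : Type*} (G : SimpleGraph V) : Prop :=
  ∀ v : V, (G.neighborSet v).ncard = 3

/-- The edge cut determined by a vertex subset `S`: edges with exactly one endpoint in `S`. -/
def edgeCut {V : Type*} (G : SimpleGraph V) (S : Set V) : Set (Sym2 V) :=
  {e | e ∈ G.edgeSet ∧ ∃ u v, e = s(u, v) ∧ u ∈ S ∧ v ∉ S}

/-- Vertices of the Petersen graph: 2-element subsets of a 5-element set. -/
abbrev PetersenVertex : Type := {s : Finset (Fin 5) // s.card = 2}

/-- The Petersen graph as the Kneser graph K(5,2). -/
def Petersen : SimpleGraph PetersenVertex where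
  Adj a b := Disjoint a.1 b.1
  symm := ⟨fun _ _ h => h.symm⟩
  loopless := ⟨by
    intro a h
    change Disjoint a.1 a.1 at h
    rw [disjoint_self] at h
    simpa [h] using a.2⟩

def pu (i : Fin 5) : PetersenVertex := ⟨{i, i+1}, by fin_cases i <;> decide⟩
def pw (i : Fin 5) : PetersenVertex := ⟨{i, i+2}, by fin_cases i <;> decide⟩

lemma adj_uu : ∀ i : Fin 5, Petersen.Adj (pu i) (pu (i+2)) :=
  fun i => (by decide : ∀ i : Fin 5, Disjoint (pu i).1 (pu (i+2)).1) i
lemma adj_ww : ∀ i : Fin 5, Petersen.Adj (pw i) (pw (i+1)) :=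
  fun i => (by decide : ∀ i : Fin 5, Disjoint (pw i).1 (pw (i+1)).1) i
lemma adj_uw : ∀ i : Fin 5, Petersen.Adj (pu i) (pw (i+2)) :=
  fun i => (by decide : ∀ i : Fin 5, Disjoint (pu i).1 (pw (i+2)).1) i

lemma third_eq : ∀ a b c : Fin 3, a ≠ b → a ≠ c → b ≠ c → c = -(a + b) := by decide

set_option maxRecDepth 100000 in
set_option maxHeartbeats 4000000 in
lemma finLemma : ∀ o p : Fin 5 → Fin 3,
    (∀ i, o i ≠ o (i+3)) →
    (∀ i, p i ≠ p (i+4) ∧ p i ≠ -(o (i+3) + o (i+1)) ∧ p (i+4) ≠ -(o (i+3) + o (i+1))) →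
    False := by decide

theorem stmt4 : ¬ ∃ phi : Sym2 PetersenVertex → Fin 3, IsProper3EdgeColoring Petersen phi := by
  rintro ⟨phi, h⟩
  set o : Fin 5 → Fin 3 := fun i => phi s(pu i, pu (i+2)) with ho
  set p : Fin 5 → Fin 3 := fun i => phi s(pw i, pw (i+1)) with hp
  set sc : Fin 5 → Fin 3 := fun i => phi s(pu i, pw (i+2)) with hsc
  have e52 : ∀ i : Fin 5, i + 3 + 2 = i := by decide
  have e41 : ∀ i : Fin 5, i + 4 + 1 = i := by decide
  have e33 : ∀ i : Fin 5, i + 3 + 3 = i + 1 := by decide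
  have key : ∀ (a b c d : PetersenVertex), Petersen.Adj a b → Petersen.Adj c d →
      s(a,b) ≠ s(c,d) → (∃ v, v ∈ (s(a,b) : Sym2 PetersenVertex) ∧ v ∈ (s(c,d) : Sym2 PetersenVertex)) →
      phi s(a,b) ≠ phi s(c,d) :=
    fun a b c d h1 h2 hne hsh => h _ ((Petersen.mem_edgeSet).mpr h1) _ ((Petersen.mem_edgeSet).mpr h2) hne hsh
  -- constraints at outer vertices pu i
  have ho1 : ∀ i : Fin 5, o i ≠ o (i+3) := by
    intro i
    have := key (pu i) (pu (i+2)) (pu (i+3)) (pu i) (adj_uu i)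
      (by have := adj_uu (i+3); rwa [e52] at this)
      ((by decide : ∀ i : Fin 5, (s(pu i, pu (i+2)) : Sym2 PetersenVertex) ≠ s(pu (i+3), pu i)) i)
      ⟨pu i, Sym2.mem_mk_left _ _, Sym2.mem_mk_right _ _⟩
    simpa [ho, e52] using this
  have ho2 : ∀ i : Fin 5, o i ≠ sc i := by
    intro i
    exact key (pu i) (pu (i+2)) (pu i) (pw (i+2)) (adj_uu i) (adj_uw i)
      ((by decide : ∀ i : Fin 5, (s(pu i, pu (i+2)) : Sym2 PetersenVertex) ≠ s(pu i, pw (i+2))) i)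
      ⟨pu i, Sym2.mem_mk_left _ _, Sym2.mem_mk_left _ _⟩
  have ho3 : ∀ i : Fin 5, o (i+3) ≠ sc i := by
    intro i
    have := key (pu (i+3)) (pu i) (pu i) (pw (i+2))
      (by have := adj_uu (i+3); rwa [e52] at this) (adj_uw i)
      ((by decide : ∀ i : Fin 5, (s(pu (i+3), pu i) : Sym2 PetersenVertex) ≠ s(pu i, pw (i+2))) i)
      ⟨pu i, Sym2.mem_mk_right _ _, Sym2.mem_mk_left _ _⟩
    have hrw : (s(pu (i+3), pu i) : Sym2 PetersenVertex) = s(pu (i+3), pu ((i+3)+2)) := by rw [e52]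
    rw [hrw] at this
    exact this
  have hsceq : ∀ i : Fin 5, sc i = -(o i + o (i+3)) :=
    fun i => third_eq _ _ _ (ho1 i) (ho2 i) (ho3 i)
  -- constraints at inner vertices pw j
  have hp1 : ∀ j : Fin 5, p j ≠ p (j+4) := by
    intro j
    have := key (pw j) (pw (j+1)) (pw (j+4)) (pw j) (adj_ww j)
      (by have := adj_ww (j+4); rwa [e41] at this)
      ((by decide : ∀ j : Fin 5, (s(pw j, pw (j+1)) : Sym2 PetersenVertex) ≠ s(pw (j+4), pw j)) j)
      ⟨pw j, Sym2.mem_mk_left _ _, Sym2.mem_mk_right _ _⟩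
    have hrw : (s(pw (j+4), pw j) : Sym2 PetersenVertex) = s(pw (j+4), pw ((j+4)+1)) := by rw [e41]
    rw [hrw] at this
    exact this
  have hp2 : ∀ j : Fin 5, p j ≠ sc (j+3) := by
    intro j
    have := key (pw j) (pw (j+1)) (pu (j+3)) (pw j) (adj_ww j)
      (by have := adj_uw (j+3); rwa [e52] at this)
      ((by decide : ∀ j : Fin 5, (s(pw j, pw (j+1)) : Sym2 PetersenVertex) ≠ s(pu (j+3), pw j)) j)
      ⟨pw j, Sym2.mem_mk_left _ _, Sym2.mem_mk_right _ _⟩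
    have hrw : (s(pu (j+3), pw j) : Sym2 PetersenVertex) = s(pu (j+3), pw ((j+3)+2)) := by rw [e52]
    rw [hrw] at this
    exact this
  have hp3 : ∀ j : Fin 5, p (j+4) ≠ sc (j+3) := by
    intro j
    have := key (pw (j+4)) (pw j) (pu (j+3)) (pw j)
      (by have := adj_ww (j+4); rwa [e41] at this)
      (by have := adj_uw (j+3); rwa [e52] at this)
      ((by decide : ∀ j : Fin 5, (s(pw (j+4), pw j) : Sym2 PetersenVertex) ≠ s(pu (j+3), pw j)) j)
      ⟨pw j, Sym2.mem_mk_right _ _, Sym2.mem_mk_right _ _⟩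
    have hrw1 : (s(pw (j+4), pw j) : Sym2 PetersenVertex) = s(pw (j+4), pw ((j+4)+1)) := by rw [e41]
    have hrw2 : (s(pu (j+3), pw j) : Sym2 PetersenVertex) = s(pu (j+3), pw ((j+3)+2)) := by rw [e52]
    rw [hrw1, hrw2] at this
    exact this
  refine finLemma o p ho1 (fun j => ⟨hp1 j, ?_, ?_⟩)
  · have := hp2 j
    rw [hsceq (j+3), e33] at this
    exact this
  · have := hp3 j
    rw [hsceq (j+3), e33] at this
    exact this
end

section
/- Let G be a cubic graph with circumference c (the length of a longest cycle). Then c ≤ |V(G)| − r₃(G) + 1, where r₃(G) is the minimum number of edges whose removal makes G 3-edge-colorable. Equivalently, r₃(G) ≤ |V(G)| − circ(G) + 1. -/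
open SimpleGraph

/-- The resistance `r₃(G)`: minimum number of edges to delete to get a 3-edge-colorable graph. -/
noncomputable def resistance {V : Type*} (G : SimpleGraph V) : ℕ :=
  sInf {n | ∃ M : Set (Sym2 V), M ⊆ G.edgeSet ∧ M.ncard = n ∧
    ∃ phi, IsProper3EdgeColoring (G.deleteEdges M) phi}

/-- The circumference of `G`: the length of a longest cycle. -/
noncomputable def circumference {V : Type*} (G : SimpleGraph V) : ℕ :=
  sSup {n | ∃ (v : V) (w : G.Walk v v), w.IsCycle ∧ w.length = n}

section Aux
attribute [local instance] Classical.propDecidable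
variable {V : Type*}

/-- properness of an edge coloring restricted to an edge set -/
def EProper (F : Set (Sym2 V)) (phi : Sym2 V → Fin 3) : Prop :=
  ∀ e₁ ∈ F, ∀ e₂ ∈ F, e₁ ≠ e₂ → (∃ v, v ∈ e₁ ∧ v ∈ e₂) → phi e₁ ≠ phi e₂

def edgesAt (F : Set (Sym2 V)) (u : V) : Set (Sym2 V) := {e | e ∈ F ∧ u ∈ e}

def avail (F : Set (Sym2 V)) (phi : Sym2 V → Fin 3) (u : V) : Set (Fin 3) :=
  {γ | ∀ e ∈ F, u ∈ e → phi e ≠ γ}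

lemma eproper_mono {F' F : Set (Sym2 V)} {phi} (h : F' ⊆ F) (hp : EProper F phi) :
    EProper F' phi := fun e₁ h₁ e₂ h₂ => hp e₁ (h h₁) e₂ (h h₂)

lemma eq_of_ncard_le_one {α : Type*} {s : Set α} (hs : s.Finite) (h : s.ncard ≤ 1)
    {x y : α} (hx : x ∈ s) (hy : y ∈ s) : x = y := by
  exact (Set.ncard_le_one hs).mp h x hx y hy

lemma eq_of_ncard_le_two {α : Type*} {s : Set α} (hs : s.Finite) (h : s.ncard ≤ 2)
    {p x y : α} (hp : p ∈ s) (hx : x ∈ s) (hy : y ∈ s) (hxp : x ≠ p) (hyp : y ≠ p) :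
    x = y := by
  by_contra hxy
  have hsub : {p, x, y} ⊆ s := by
    intro z hz; simp only [Set.mem_insert_iff, Set.mem_singleton_iff] at hz
    rcases hz with rfl | rfl | rfl <;> assumption
  have h3 : ({p, x, y} : Set α).ncard = 3 := by
    rw [Set.ncard_insert_of_notMem (by simp [Ne.symm hxp, Ne.symm hyp]),
      Set.ncard_insert_of_notMem (by simp [hxy]), Set.ncard_singleton]
  have := Set.ncard_le_ncard hsub hs
  omega

lemma avail_nonempty {F : Set (Sym2 V)} {phi} (hp : EProper F phi) {u : V}
    (hfin : (edgesAt F u).Finite) (h : (edgesAt F u).ncard ≤ 2) :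
    (avail F phi u).Nonempty := by
  by_contra hne
  rw [Set.not_nonempty_iff_eq_empty] at hne
  have hsub : (Set.univ : Set (Fin 3)) ⊆ phi '' (edgesAt F u) := by
    intro γ _
    by_contra hγ
    have : γ ∈ avail F phi u := by
      intro e he hue hc
      exact hγ ⟨e, ⟨he, hue⟩, hc⟩
    simp [hne] at this
  have hinj : Set.InjOn phi (edgesAt F u) := by
    intro e₁ h₁ e₂ h₂ heq
    by_contra hne'
    exact hp e₁ h₁.1 e₂ h₂.1 hne' ⟨u, h₁.2, h₂.2⟩ heq
  have h1 : (Set.univ : Set (Fin 3)).ncard ≤ (phi '' (edgesAt F u)).ncard :=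
    Set.ncard_le_ncard hsub (hfin.image phi)
  rw [Set.ncard_univ, Nat.card_eq_fintype_card, Fintype.card_fin] at h1
  rw [Set.ncard_image_of_injOn hinj] at h1
  omega

lemma addEdge {F : Set (Sym2 V)} {phi} (hp : EProper F phi) {e₀ : Sym2 V} (he₀ : e₀ ∉ F)
    {γ : Fin 3} (h : ∀ x ∈ e₀, ∀ e ∈ F, x ∈ e → phi e ≠ γ) :
    EProper (insert e₀ F) (fun e => if e = e₀ then γ else phi e) := by
  intro e₁ h₁ e₂ h₂ hne ⟨x, hx₁, hx₂⟩
  rcases h₁ with rfl | h₁ <;> rcases h₂ with rfl | h₂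
  · exact absurd rfl hne
  · have hne₂ : e₂ ≠ e₁ := fun h => he₀ (h ▸ h₂)
    simp only [if_pos rfl, if_neg hne₂]
    exact fun hc => h x hx₁ e₂ h₂ hx₂ hc.symm
  · have hne₁ : e₁ ≠ e₂ := fun h => he₀ (h ▸ h₁)
    simp only [if_pos rfl, if_neg hne₁]
    exact fun hc => h x hx₂ e₁ h₁ hx₁ hc
  · have hne₁ : e₁ ≠ e₀ := fun h => he₀ (h ▸ h₁)
    have hne₂ : e₂ ≠ e₀ := fun h => he₀ (h ▸ h₂)
    simp only [if_neg hne₁, if_neg hne₂]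
    exact hp e₁ h₁ e₂ h₂ hne ⟨x, hx₁, hx₂⟩

lemma getVert_injOn {G : SimpleGraph V} {u v : V} {p : G.Walk u v} (hp : p.IsPath) :
    ∀ i ≤ p.length, ∀ j ≤ p.length, p.getVert i = p.getVert j → i = j := by
  induction p with
  | nil => intro i hi j hj _; simp_all
  | cons h q ih =>
    rename_i u' v' w'
    rw [SimpleGraph.Walk.cons_isPath_iff] at hp
    intro i hi j hj heq
    match i, j with
    | 0, 0 => rfl
    | 0, j + 1 =>
      exfalso
      apply hp.2
      rw [SimpleGraph.Walk.mem_support_iff_exists_getVert]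
      refine ⟨j, ?_, ?_⟩
      · rw [SimpleGraph.Walk.getVert_cons_succ] at heq
        rw [← heq]; rfl
      · simpa using hj
    | i + 1, 0 =>
      exfalso
      apply hp.2
      rw [SimpleGraph.Walk.mem_support_iff_exists_getVert]
      refine ⟨i, ?_, ?_⟩
      · rw [SimpleGraph.Walk.getVert_cons_succ] at heq
        rw [heq]; rfl
      · simpa using hi
    | i + 1, j + 1 =>
      rw [SimpleGraph.Walk.getVert_cons_succ, SimpleGraph.Walk.getVert_cons_succ] at heq
      have := ih hp.1 i (by simpa using hi) j (by simpa using hj) heq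
      omega

lemma path_agree [Finite V] {H : SimpleGraph V} (hdeg : ∀ u, (H.neighborSet u).ncard ≤ 2)
    {a x y : V} (ha : (H.neighborSet a).ncard ≤ 1) (p : H.Walk a x) (q : H.Walk a y)
    (hpp : p.IsPath) (hqq : q.IsPath) :
    ∀ i, i ≤ p.length → i ≤ q.length → p.getVert i = q.getVert i := by
  intro i
  induction i using Nat.strong_induction_on with
  | _ i ih =>
    match i with
    | 0 => intro _ _; simp [SimpleGraph.Walk.getVert_zero]
    | 1 =>
      intro h1p h1q
      have hp1 : p.getVert 1 ∈ H.neighborSet a := by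
        have := p.adj_getVert_succ (i := 0) (by omega)
        rwa [SimpleGraph.Walk.getVert_zero] at this
      have hq1 : q.getVert 1 ∈ H.neighborSet a := by
        have := q.adj_getVert_succ (i := 0) (by omega)
        rwa [SimpleGraph.Walk.getVert_zero] at this
      exact eq_of_ncard_le_one (Set.toFinite _) ha hp1 hq1
    | (k+2) =>
      intro hip hiq
      have e1 : p.getVert k = q.getVert k := ih k (by omega) (by omega) (by omega)
      have e2 : p.getVert (k+1) = q.getVert (k+1) := ih (k+1) (by omega) (by omega) (by omega)
      have hprev : p.getVert k ∈ H.neighborSet (p.getVert (k+1)) :=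
        (p.adj_getVert_succ (i := k) (by omega)).symm
      have hx1 : p.getVert (k+2) ∈ H.neighborSet (p.getVert (k+1)) :=
        p.adj_getVert_succ (i := k+1) (by omega)
      have hx2 : q.getVert (k+2) ∈ H.neighborSet (p.getVert (k+1)) := by
        rw [e2]
        exact q.adj_getVert_succ (i := k+1) (by omega)
      have hne1 : p.getVert (k+2) ≠ p.getVert k := fun h => by
        have := getVert_injOn hpp (k+2) hip k (by omega) h
        omega
      have hne2 : q.getVert (k+2) ≠ p.getVert k := by
        rw [e1]
        intro h
        have := getVert_injOn hqq (k+2) hiq k (by omega) h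
        omega
      exact eq_of_ncard_le_two (Set.toFinite _) (hdeg _) hprev hx1 hx2 hne1 hne2

lemma leaf_aux [Finite V] {H : SimpleGraph V} (hdeg : ∀ u, (H.neighborSet u).ncard ≤ 2)
    {a x y : V} (hax : a ≠ x) (hxy : x ≠ y)
    (ha : (H.neighborSet a).ncard ≤ 1) (hx : (H.neighborSet x).ncard ≤ 1)
    (p : H.Walk a x) (q : H.Walk a y) (hpp : p.IsPath) (hqq : q.IsPath)
    (hlen : p.length ≤ q.length) : False := by
  have hagree := path_agree hdeg ha p q hpp hqq p.length le_rfl hlen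
  rw [SimpleGraph.Walk.getVert_length] at hagree
  rcases eq_or_lt_of_le hlen with heq | hlt
  · rw [heq, SimpleGraph.Walk.getVert_length] at hagree
    exact hxy hagree
  · have hm1 : 1 ≤ p.length := by
      rcases Nat.eq_zero_or_pos p.length with h0 | h1
      · exfalso
        apply hax
        have := hagree
        rw [h0] at this
        rw [SimpleGraph.Walk.getVert_zero] at this
        exact this.symm
      · exact h1
    obtain ⟨k, hk⟩ : ∃ k, p.length = k + 1 := ⟨p.length - 1, by omega⟩
    rw [hk] at hagree hlt
    have hn1 : q.getVert k ∈ H.neighborSet x := by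
      rw [hagree]
      exact (q.adj_getVert_succ (i := k) (by omega)).symm
    have hn2 : q.getVert (k+2) ∈ H.neighborSet x := by
      rw [hagree]
      exact q.adj_getVert_succ (i := k+1) (by omega)
    have : q.getVert k = q.getVert (k+2) :=
      eq_of_ncard_le_one (Set.toFinite _) hx hn1 hn2
    have := getVert_injOn hqq k (by omega) (k+2) (by omega) this
    omega

lemma three_leaves [Finite V] (H : SimpleGraph V)
    (hdeg : ∀ u, (H.neighborSet u).ncard ≤ 2) (a b c : V)
    (hab : a ≠ b) (hac : a ≠ c) (hbc : b ≠ c)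
    (ha : (H.neighborSet a).ncard ≤ 1) (hb : (H.neighborSet b).ncard ≤ 1)
    (hc : (H.neighborSet c).ncard ≤ 1)
    (hrb : H.Reachable a b) (hrc : H.Reachable a c) : False := by
  obtain ⟨w₁⟩ := hrb
  obtain ⟨w₂⟩ := hrc
  rcases le_total w₁.bypass.length w₂.bypass.length with h | h
  · exact leaf_aux hdeg hab hbc ha hb w₁.bypass w₂.bypass
      w₁.bypass_isPath w₂.bypass_isPath h
  · exact leaf_aux hdeg hac (Ne.symm hbc) ha hc w₂.bypass w₁.bypass
      w₂.bypass_isPath w₁.bypass_isPath h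

lemma kempe [Fintype V] {F : Set (Sym2 V)} {phi} (hp : EProper F phi)
    (hnd : ∀ e ∈ F, ¬ e.IsDiag)
    {a b c : V} (hab : a ≠ b) (hac : a ≠ c) (hbc : b ≠ c) {α : Fin 3}
    (hA : avail F phi a = {α}) (hB : avail F phi b = {α}) (hC : avail F phi c = {α}) :
    ∃ phi', EProper F phi' ∧ ∃ β : Fin 3, β ≠ α ∧ β ∈ avail F phi' a ∧
      (α ∈ avail F phi' b ∨ α ∈ avail F phi' c) := by
  obtain ⟨β, hβα⟩ : ∃ β : Fin 3, β ≠ α := exists_ne α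
  have hαav : ∀ u : V, avail F phi u = {α} → ∀ e ∈ F, u ∈ e → phi e ≠ α := by
    intro u hu
    have : α ∈ avail F phi u := by rw [hu]; exact Set.mem_singleton α
    exact this
  have hgetedge : ∀ u : V, avail F phi u = {α} → ∃ e ∈ F, u ∈ e ∧ phi e = β := by
    intro u hu
    by_contra h
    push_neg at h
    have : β ∈ avail F phi u := fun e he hue => h e he hue
    rw [hu] at this
    exact hβα this
  obtain ⟨ea, hea, haea, hpea⟩ := hgetedge a hA
  obtain ⟨eb, heb, hbeb, hpeb⟩ := hgetedge b hB
  obtain ⟨ec, hec, hcec, hpec⟩ := hgetedge c hC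
  set GK : SimpleGraph V :=
    SimpleGraph.fromRel (fun u w => s(u, w) ∈ F ∧ (phi s(u, w) = α ∨ phi s(u, w) = β)) with hGK
  have hGKadj : ∀ u w : V,
      GK.Adj u w ↔ u ≠ w ∧ (s(u, w) ∈ F ∧ (phi s(u, w) = α ∨ phi s(u, w) = β)) := by
    intro u w
    rw [hGK, SimpleGraph.fromRel_adj]
    constructor
    · rintro ⟨h1, h2 | h2⟩
      · exact ⟨h1, h2⟩
      · rw [Sym2.eq_swap] at h2
        exact ⟨h1, h2⟩
    · rintro ⟨h1, h2⟩
      exact ⟨h1, Or.inl h2⟩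
  set Comp : Set (Sym2 V) :=
    {e | e ∈ F ∧ (phi e = α ∨ phi e = β) ∧ ∀ x ∈ e, GK.Reachable a x} with hCompDef
  have hclosure : ∀ e ∈ F, (phi e = α ∨ phi e = β) → ∀ x ∈ e, GK.Reachable a x →
      e ∈ Comp := by
    intro e he hcol x hxe hreach
    refine ⟨he, hcol, ?_⟩
    obtain ⟨z, rfl⟩ := Sym2.mem_iff_exists.mp hxe
    have hxz : x ≠ z := by
      intro h
      exact hnd _ he (by rw [h]; exact Sym2.mk_isDiag_iff.mpr rfl)
    have hadj : GK.Adj x z := (hGKadj x z).mpr ⟨hxz, he, hcol⟩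
    intro y hy
    rcases Sym2.mem_iff.mp hy with rfl | rfl
    · exact hreach
    · exact hreach.trans hadj.reachable
  set swapc : Fin 3 → Fin 3 := fun t => if t = α then β else if t = β then α else t with hswapc
  have hswapα : swapc α = β := by simp [hswapc]
  have hswapβ : swapc β = α := by simp [hswapc, hβα]
  have hswap_inv : Function.Involutive swapc := by
    intro t
    simp only [hswapc]
    split_ifs <;> simp_all
  have hswap_inj : Function.Injective swapc := hswap_inv.injective
  set phi' : Sym2 V → Fin 3 := fun e => if e ∈ Comp then swapc (phi e) else phi e with hphi'
  have hphi'_of_not : ∀ e, e ∉ Comp → phi' e = phi e := by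
    intro e he
    simp [hphi', he]
  have hphi'_of_mem : ∀ e, e ∈ Comp → phi' e = swapc (phi e) := by
    intro e he
    simp [hphi', he]
  have hmixed : ∀ e₁ ∈ F, ∀ e₂ ∈ F, e₁ ∈ Comp → e₂ ∉ Comp →
      (∃ x, x ∈ e₁ ∧ x ∈ e₂) → phi' e₁ ≠ phi' e₂ := by
    intro e₁ h₁ e₂ h₂ c₁ c₂ ⟨x, hx₁, hx₂⟩
    have hcol₂ : ¬(phi e₂ = α ∨ phi e₂ = β) := by
      intro hcol
      exact c₂ (hclosure e₂ h₂ hcol x hx₂ (c₁.2.2 x hx₁))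
    push_neg at hcol₂
    rw [hphi'_of_mem e₁ c₁, hphi'_of_not e₂ c₂]
    rcases c₁.2.1 with h | h <;> rw [h]
    · rw [hswapα]
      exact fun hc => hcol₂.2 hc.symm
    · rw [hswapβ]
      exact fun hc => hcol₂.1 hc.symm
  have hproper' : EProper F phi' := by
    intro e₁ h₁ e₂ h₂ hne hx
    by_cases c₁ : e₁ ∈ Comp <;> by_cases c₂ : e₂ ∈ Comp
    · rw [hphi'_of_mem e₁ c₁, hphi'_of_mem e₂ c₂]
      exact fun h => hp e₁ h₁ e₂ h₂ hne hx (hswap_inj h)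
    · exact hmixed e₁ h₁ e₂ h₂ c₁ c₂ hx
    · exact fun h => hmixed e₂ h₂ e₁ h₁ c₂ c₁ (by obtain ⟨x, p, q⟩ := hx; exact ⟨x, q, p⟩) h.symm
    · rw [hphi'_of_not e₁ c₁, hphi'_of_not e₂ c₂]
      exact hp e₁ h₁ e₂ h₂ hne hx
  have heaComp : ea ∈ Comp := hclosure ea hea (Or.inr hpea) a haea (SimpleGraph.Reachable.refl a)
  have hav_a : β ∈ avail F phi' a := by
    intro e he hae
    by_cases hcol : phi e = α ∨ phi e = β
    · rcases hcol with h | h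
      · exact absurd h (hαav a hA e he hae)
      · have heea : e = ea := by
          by_contra hne
          exact hp e he ea hea hne ⟨a, hae, haea⟩ (h.trans hpea.symm)
        rw [heea, hphi'_of_mem ea heaComp, hpea, hswapβ]
        exact hβα.symm
    · have : e ∉ Comp := fun hc => hcol hc.2.1
      rw [hphi'_of_not e this]
      push_neg at hcol
      exact hcol.2
  refine ⟨phi', hproper', β, hβα, hav_a, ?_⟩
  by_contra hor
  push_neg at hor
  obtain ⟨hnb, hnc⟩ := hor
  have hex : ∀ u : V, avail F phi u = {α} → α ∉ avail F phi' u → GK.Reachable a u := by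
    intro u hu hnu
    simp only [avail, Set.mem_setOf_eq] at hnu
    push_neg at hnu
    obtain ⟨e, he, hue, hpe⟩ := hnu
    by_cases hcomp : e ∈ Comp
    · exact hcomp.2.2 u hue
    · exfalso
      rw [hphi'_of_not e hcomp] at hpe
      exact hαav u hu e he hue hpe
  have hrb := hex b hB hnb
  have hrc := hex c hC hnc
  set K : Set (Sym2 V) := {e | e ∈ F ∧ (phi e = α ∨ phi e = β)} with hK
  have hemb : ∀ u : V, (GK.neighborSet u).ncard ≤ (edgesAt K u).ncard := by
    intro u
    apply Set.ncard_le_ncard_of_injOn (fun w => s(u, w))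
    · intro w hw
      rw [SimpleGraph.mem_neighborSet, hGKadj] at hw
      exact ⟨⟨hw.2.1, hw.2.2⟩, by simp⟩
    · intro w₁ _ w₂ _ h
      exact Sym2.congr_right.mp h
  have hKdeg : ∀ u : V, (edgesAt K u).ncard ≤ 2 := by
    intro u
    have h2 : (edgesAt K u).ncard ≤ ({α, β} : Set (Fin 3)).ncard := by
      apply Set.ncard_le_ncard_of_injOn phi
      · rintro e ⟨⟨-, hcol⟩, -⟩
        rcases hcol with h | h <;> simp [h]
      · rintro e₁ ⟨⟨he₁, -⟩, hu₁⟩ e₂ ⟨⟨he₂, -⟩, hu₂⟩ h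
        by_contra hne
        exact hp e₁ he₁ e₂ he₂ hne ⟨u, hu₁, hu₂⟩ h
    rwa [Set.ncard_pair (Ne.symm hβα)] at h2
  have hdeg2 : ∀ u : V, (GK.neighborSet u).ncard ≤ 2 :=
    fun u => le_trans (hemb u) (hKdeg u)
  have honeedge : ∀ u : V, avail F phi u = {α} → (∀ e ∈ F, u ∈ e → phi e = β → False) → False := by
    intro u hu h
    obtain ⟨e, he, hue, hpe⟩ := hgetedge u hu
    exact h e he hue hpe
  have hdeg1 : ∀ (u : V) (eu : Sym2 V), eu ∈ F → u ∈ eu → phi eu = β →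
      avail F phi u = {α} → (GK.neighborSet u).ncard ≤ 1 := by
    intro u eu heu huu hpeu hu
    refine le_trans (hemb u) ?_
    have hsub : edgesAt K u ⊆ {eu} := by
      rintro e ⟨⟨he, hcol⟩, hue⟩
      rcases hcol with h | h
      · exact absurd h (hαav u hu e he hue)
      · by_contra hne
        exact hp e he eu heu hne ⟨u, hue, huu⟩ (h.trans hpeu.symm)
    have := Set.ncard_le_ncard hsub (Set.toFinite _)
    simpa using this
  exact three_leaves GK hdeg2 a b c hab hac hbc
    (hdeg1 a ea hea haea hpea hA) (hdeg1 b eb heb hbeb hpeb hB) (hdeg1 c ec hec hcec hpec hC)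
    hrb hrc

lemma colorOne {F : Set (Sym2 V)} {phi} (hp : EProper F phi) {v : V}
    (hvF : ∀ e ∈ F, v ∉ e) {a : V} (hav : a ≠ v) {γ : Fin 3}
    (h : γ ∈ avail F phi a) : ∃ psi, EProper (F ∪ {s(v, a)}) psi := by
  have he₀ : s(v, a) ∉ F := fun hc => hvF _ hc (by simp)
  rw [Set.union_singleton]
  refine ⟨_, addEdge hp he₀ (γ := γ) ?_⟩
  intro x hx e he hxe
  rw [Sym2.mem_iff] at hx
  rcases hx with rfl | rfl
  · exact absurd hxe (hvF e he)
  · exact h e he hxe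

lemma colorTwo {F : Set (Sym2 V)} {phi} (hp : EProper F phi) {v : V}
    (hvF : ∀ e ∈ F, v ∉ e) {a₁ a₂ : V} (h12 : a₁ ≠ a₂) (h1v : a₁ ≠ v) (h2v : a₂ ≠ v)
    {γ₁ γ₂ : Fin 3} (hγ : γ₁ ≠ γ₂) (h1 : γ₁ ∈ avail F phi a₁) (h2 : γ₂ ∈ avail F phi a₂) :
    ∃ psi, EProper (F ∪ {s(v, a₁), s(v, a₂)}) psi := by
  have he₁ : s(v, a₁) ∉ F := fun hc => hvF _ hc (by simp)
  have hp₁ := addEdge hp he₁ (γ := γ₁) ?_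
  · have he₂ : s(v, a₂) ∉ insert s(v, a₁) F := by
      intro hc
      rcases hc with hc | hc
      · rw [Sym2.eq_iff] at hc
        rcases hc with ⟨-, h⟩ | ⟨h, -⟩
        · exact h12.symm h
        · exact h1v h.symm
      · exact hvF _ hc (by simp)
    have hp₂ := addEdge hp₁ he₂ (γ := γ₂) ?_
    · have hU : F ∪ {s(v, a₁), s(v, a₂)} = insert s(v, a₂) (insert s(v, a₁) F) := by
        ext e
        simp only [Set.mem_union, Set.mem_insert_iff, Set.mem_singleton_iff]
        tauto
      rw [hU]
      exact ⟨_, hp₂⟩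
    · intro x hx e he hxe
      rw [Sym2.mem_iff] at hx
      rcases hx with rfl | rfl
      · rcases he with rfl | he
        · simpa using hγ
        · exact absurd hxe (hvF e he)
      · rcases he with rfl | he
        · exfalso
          rw [Sym2.mem_iff] at hxe
          rcases hxe with h | h
          · exact h2v h
          · exact h12 h.symm
        · have : e ≠ s(v, a₁) := fun h => he₁ (h ▸ he)
          simp only [if_neg this]
          exact h2 e he hxe
  · intro x hx e he hxe
    rw [Sym2.mem_iff] at hx
    rcases hx with rfl | rfl
    · exact absurd hxe (hvF e he)
    · exact h1 e he hxe

lemma pair_colors {A B : Set (Fin 3)} (hA : A.Nonempty) (hB : B.Nonempty) :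
    (∃ γ₁ ∈ A, ∃ γ₂ ∈ B, γ₁ ≠ γ₂) ∨ (∃ α, A = {α} ∧ B = {α}) := by
  obtain ⟨x, hx⟩ := hA
  obtain ⟨y, hy⟩ := hB
  by_cases hxy : x = y
  · subst hxy
    by_cases hA1 : ∃ x' ∈ A, x' ≠ x
    · obtain ⟨x', hx', hne⟩ := hA1
      exact Or.inl ⟨x', hx', x, hy, hne⟩
    · by_cases hB1 : ∃ y' ∈ B, y' ≠ x
      · obtain ⟨y', hy', hne⟩ := hB1
        exact Or.inl ⟨x, hx, y', hy', (Ne.symm hne)⟩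
      · push_neg at hA1 hB1
        refine Or.inr ⟨x, ?_, ?_⟩
        · exact Set.eq_singleton_iff_unique_mem.mpr ⟨hx, hA1⟩
        · exact Set.eq_singleton_iff_unique_mem.mpr ⟨hy, hB1⟩
  · exact Or.inl ⟨x, hx, y, hy, hxy⟩

lemma triple_diff_right {α' : Type*} {x y z : α'} (hxz : x ≠ z) (hyz : y ≠ z) :
    ({x, y, z} : Set α') \ {z} = {x, y} := by
  ext e
  simp only [Set.mem_diff, Set.mem_insert_iff, Set.mem_singleton_iff]
  constructor
  · rintro ⟨h | h | h, hne⟩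
    · exact Or.inl h
    · exact Or.inr h
    · exact absurd h hne
  · rintro (rfl | rfl)
    · exact ⟨Or.inl rfl, hxz⟩
    · exact ⟨Or.inr (Or.inl rfl), hyz⟩

lemma triple_diff_mid {α' : Type*} {x y z : α'} (hxy : x ≠ y) (hzy : z ≠ y) :
    ({x, y, z} : Set α') \ {y} = {x, z} := by
  have h : ({x, y, z} : Set α') = {x, z, y} := by
    ext e
    simp only [Set.mem_insert_iff, Set.mem_singleton_iff]
    tauto
  rw [h]
  exact triple_diff_right hxy hzy

lemma extend [Fintype V] {F : Set (Sym2 V)} {phi} (hp : EProper F phi)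
    (hnd : ∀ e ∈ F, ¬ e.IsDiag) (v : V) (hvF : ∀ e ∈ F, v ∉ e) (N : Set (Sym2 V))
    (hNv : ∀ e ∈ N, v ∈ e ∧ ¬ e.IsDiag)
    (hdeg : ∀ e ∈ N, ∀ u ∈ e, u ≠ v → (edgesAt F u).ncard ≤ 2)
    (hN : N.ncard ≤ 3) :
    ∃ D ⊆ N, D.ncard ≤ 1 ∧ ∃ psi, EProper (F ∪ (N \ D)) psi := by
  have hfin : N.Finite := Set.toFinite N
  have hextract : ∀ e ∈ N, ∃ u, u ≠ v ∧ e = s(v, u) := by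
    intro e he
    obtain ⟨hv, hnd'⟩ := hNv e he
    obtain ⟨u, rfl⟩ := Sym2.mem_iff_exists.mp hv
    refine ⟨u, fun h => hnd' ?_, rfl⟩
    rw [Sym2.mk_isDiag_iff]
    exact h.symm
  have havail : ∀ u : V, u ≠ v → s(v, u) ∈ N → (avail F phi u).Nonempty := by
    intro u hu he
    exact avail_nonempty hp (Set.toFinite _) (hdeg _ he u (by simp) hu)
  have hcases : N.ncard = 0 ∨ N.ncard = 1 ∨ N.ncard = 2 ∨ N.ncard = 3 := by omega
  rcases hcases with h | h | h | h
  · rw [Set.ncard_eq_zero hfin] at h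
    refine ⟨∅, Set.empty_subset _, by simp, phi, ?_⟩
    rw [h]
    simpa using hp
  · obtain ⟨e, hNe⟩ := Set.ncard_eq_one.mp h
    have h1 : e ∈ N := by rw [hNe]; rfl
    obtain ⟨a, hav', he⟩ := hextract e h1
    subst he
    obtain ⟨γ, hγ⟩ := havail a hav' h1
    obtain ⟨psi, hpsi⟩ := colorOne hp hvF hav' hγ
    refine ⟨∅, Set.empty_subset _, by simp, psi, ?_⟩
    rw [hNe]
    simpa using hpsi
  · obtain ⟨e₁, e₂, hne, hNe⟩ := Set.ncard_eq_two.mp h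
    have h1 : e₁ ∈ N := by rw [hNe]; simp
    have h2 : e₂ ∈ N := by rw [hNe]; simp
    obtain ⟨a₁, ha1, he⟩ := hextract e₁ h1
    subst he
    obtain ⟨γ, hγ⟩ := havail a₁ ha1 h1
    obtain ⟨psi, hpsi⟩ := colorOne hp hvF ha1 hγ
    refine ⟨{e₂}, by rw [hNe]; simp, by simp, psi, ?_⟩
    have hd : N \ {e₂} = {s(v, a₁)} := by
      rw [hNe]
      rw [Set.pair_diff_right hne]
    rw [hd]
    exact hpsi
  · obtain ⟨e₁, e₂, e₃, h12, h13, h23, hNe⟩ := Set.ncard_eq_three.mp h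
    have h1 : e₁ ∈ N := by rw [hNe]; simp
    have h2 : e₂ ∈ N := by rw [hNe]; simp
    have h3 : e₃ ∈ N := by rw [hNe]; simp
    obtain ⟨a₁, hv1, he1⟩ := hextract e₁ h1
    obtain ⟨a₂, hv2, he2⟩ := hextract e₂ h2
    obtain ⟨a₃, hv3, he3⟩ := hextract e₃ h3
    subst he1; subst he2; subst he3
    have ha12 : a₁ ≠ a₂ := fun hc => h12 (by rw [hc])
    have ha13 : a₁ ≠ a₃ := fun hc => h13 (by rw [hc])
    have ha23 : a₂ ≠ a₃ := fun hc => h23 (by rw [hc])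
    have hA1 := havail a₁ hv1 h1
    have hA2 := havail a₂ hv2 h2
    have hA3 := havail a₃ hv3 h3
    rcases pair_colors hA1 hA2 with ⟨γ₁, hγ₁, γ₂, hγ₂, hneγ⟩ | ⟨α, hs1, hs2⟩
    · obtain ⟨psi, hpsi⟩ := colorTwo hp hvF ha12 hv1 hv2 hneγ hγ₁ hγ₂
      refine ⟨{s(v, a₃)}, by rw [hNe]; simp, by simp, psi, ?_⟩
      rw [hNe, triple_diff_right h13 h23]
      exact hpsi
    · rcases pair_colors hA1 hA3 with ⟨γ₁, hγ₁, γ₃, hγ₃, hneγ⟩ | ⟨α', hs1', hs3⟩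
      · obtain ⟨psi, hpsi⟩ := colorTwo hp hvF ha13 hv1 hv3 hneγ hγ₁ hγ₃
        refine ⟨{s(v, a₂)}, by rw [hNe]; simp, by simp, psi, ?_⟩
        rw [hNe, triple_diff_mid h12 (Ne.symm h23)]
        exact hpsi
      · have hαα : α' = α := by
          have : ({α'} : Set (Fin 3)) = {α} := hs1' ▸ hs1
          exact Set.singleton_eq_singleton_iff.mp this
        subst hαα
        obtain ⟨phi', hp', β, hβα, hβa, hor⟩ :=
          kempe hp hnd ha12 ha13 ha23 hs1 hs2 hs3
        have hvF' := hvF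
        rcases hor with hb | hc
        · obtain ⟨psi, hpsi⟩ := colorTwo hp' hvF ha12 hv1 hv2 hβα hβa hb
          refine ⟨{s(v, a₃)}, by rw [hNe]; simp, by simp, psi, ?_⟩
          rw [hNe, triple_diff_right h13 h23]
          exact hpsi
        · obtain ⟨psi, hpsi⟩ := colorTwo hp' hvF ha13 hv1 hv3 hβα hβa hc
          refine ⟨{s(v, a₂)}, by rw [hNe]; simp, by simp, psi, ?_⟩
          rw [hNe, triple_diff_mid h12 (Ne.symm h23)]
          exact hpsi

/-- edges of `G` with both endpoints in `S` -/
def innerE (G : SimpleGraph V) (S : Set V) : Set (Sym2 V) :=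
  {e | e ∈ G.edgeSet ∧ ∀ x ∈ e, x ∈ S}

lemma innerE_subset_edgeSet (G : SimpleGraph V) (S : Set V) : innerE G S ⊆ G.edgeSet :=
  fun _ h => h.1

lemma innerE_mono (G : SimpleGraph V) {S T : Set V} (h : S ⊆ T) : innerE G S ⊆ innerE G T :=
  fun e he => ⟨he.1, fun x hx => h (he.2 x hx)⟩

lemma innerE_univ (G : SimpleGraph V) : innerE G Set.univ = G.edgeSet := by
  ext e
  exact ⟨fun h => h.1, fun h => ⟨h, fun x _ => trivial⟩⟩

lemma edgesAt_edgeSet (G : SimpleGraph V) (u : V) :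
    edgesAt G.edgeSet u = (fun w => s(u, w)) '' (G.neighborSet u) := by
  ext e
  constructor
  · rintro ⟨he, hue⟩
    obtain ⟨w, rfl⟩ := Sym2.mem_iff_exists.mp hue
    exact ⟨w, (SimpleGraph.mem_edgeSet G).mp he, rfl⟩
  · rintro ⟨w, hw, rfl⟩
    exact ⟨(SimpleGraph.mem_edgeSet G).mpr hw, by simp⟩

lemma ncard_edgesAt (G : SimpleGraph V) (u : V) :
    (edgesAt G.edgeSet u).ncard = (G.neighborSet u).ncard := by
  rw [edgesAt_edgeSet, Set.ncard_image_of_injOn]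
  intro w₁ _ w₂ _ h
  exact Sym2.congr_right.mp h

lemma grow [Fintype V] {G : SimpleGraph V} (hG : IsCubic G) (S₀ : Set V)
    (phi₀ : Sym2 V → Fin 3) (h₀ : EProper (innerE G S₀) phi₀) :
    ∀ (n : ℕ) (A : Set V), S₀ ⊆ A → (A \ S₀).ncard = n →
      ∃ M ⊆ innerE G A, M.ncard ≤ n ∧ ∃ phi, EProper (innerE G A \ M) phi := by
  intro n
  induction n with
  | zero =>
    intro A hSA hcard
    rw [Set.ncard_eq_zero (Set.toFinite _), Set.diff_eq_empty] at hcard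
    have hAS : A = S₀ := le_antisymm hcard hSA
    subst hAS
    exact ⟨∅, Set.empty_subset _, by simp, phi₀, by simpa using h₀⟩
  | succ n ih =>
    intro A hSA hcard
    have hne : (A \ S₀).Nonempty := by
      rw [← Set.ncard_pos (Set.toFinite _)]
      omega
    obtain ⟨v, hvA, hvS⟩ := hne
    set A' := A \ {v} with hA'
    have hSA' : S₀ ⊆ A' := fun x hx =>
      ⟨hSA hx, fun hc => hvS (by rwa [Set.mem_singleton_iff.mp hc] at hx)⟩
    have hcard' : (A' \ S₀).ncard = n := by
      have hEq : A' \ S₀ = (A \ S₀) \ {v} := by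
        ext x
        simp only [hA', Set.mem_diff, Set.mem_singleton_iff]
        tauto
      rw [hEq, Set.ncard_diff_singleton_of_mem ((Set.mem_diff _).mpr ⟨hvA, hvS⟩), hcard]
      omega
    obtain ⟨M', hM'sub, hM'card, phi', hp'⟩ := ih A' hSA' hcard'
    set F := innerE G A' \ M' with hF
    set N := {e ∈ innerE G A | v ∈ e} with hNdef
    have hvnotA' : v ∉ A' := fun hc => hc.2 rfl
    have hvinner : ∀ e ∈ innerE G A', v ∉ e := fun e he hc => hvnotA' (he.2 v hc)
    have hvF : ∀ e ∈ F, v ∉ e := fun e he => hvinner e he.1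
    have hndF : ∀ e ∈ F, ¬ e.IsDiag :=
      fun e he => G.not_isDiag_of_mem_edgeSet he.1.1
    have hNv : ∀ e ∈ N, v ∈ e ∧ ¬ e.IsDiag :=
      fun e he => ⟨he.2, G.not_isDiag_of_mem_edgeSet he.1.1⟩
    have hdeg : ∀ e ∈ N, ∀ u ∈ e, u ≠ v → (edgesAt F u).ncard ≤ 2 := by
      intro e he u hue huv
      have heuv : e = s(u, v) := by
        obtain ⟨z, rfl⟩ := Sym2.mem_iff_exists.mp hue
        rcases Sym2.mem_iff.mp he.2 with h | h
        · exact absurd h.symm huv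
        · rw [h]
      have hadj : s(u, v) ∈ G.edgeSet := heuv ▸ he.1.1
      have hsub : edgesAt F u ⊆ edgesAt G.edgeSet u \ {s(u, v)} := by
        rintro e' ⟨he', hue'⟩
        refine ⟨⟨he'.1.1, hue'⟩, fun hc => ?_⟩
        rw [Set.mem_singleton_iff] at hc
        exact hvF e' he' (by rw [hc]; simp)
      have h3 : (edgesAt G.edgeSet u).ncard = 3 := by
        rw [ncard_edgesAt]
        exact hG u
      have hmem : s(u, v) ∈ edgesAt G.edgeSet u := ⟨hadj, by simp⟩
      have h2 : (edgesAt G.edgeSet u \ {s(u, v)}).ncard = 2 := by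
        rw [Set.ncard_diff_singleton_of_mem hmem, h3]
      rw [← h2]
      exact Set.ncard_le_ncard hsub (Set.toFinite _)
    have hN3 : N.ncard ≤ 3 := by
      have hsub : N ⊆ edgesAt G.edgeSet v := fun e he => ⟨he.1.1, he.2⟩
      have h3 : (edgesAt G.edgeSet v).ncard = 3 := by
        rw [ncard_edgesAt]
        exact hG v
      rw [← h3]
      exact Set.ncard_le_ncard hsub (Set.toFinite _)
    obtain ⟨D, hDN, hDcard, psi, hpsi⟩ := extend hp' hndF v hvF N hNv hdeg hN3
    have hM'nov : ∀ e ∈ M', v ∉ e := fun e he => hvinner e (hM'sub he)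
    have hDv : ∀ e ∈ D, v ∈ e := fun e he => (hNv e (hDN he)).1
    have hsetEq : F ∪ (N \ D) = innerE G A \ (M' ∪ D) := by
      ext e
      simp only [hF, Set.mem_union, Set.mem_diff, Set.mem_sep_iff, hNdef]
      constructor
      · rintro (⟨he, hM⟩ | ⟨⟨he, hv⟩, hD⟩)
        · refine ⟨innerE_mono G Set.diff_subset he, ?_⟩
          rintro (h | h)
          · exact hM h
          · exact hvinner e he (hDv e h)
        · refine ⟨he, ?_⟩
          rintro (h | h)
          · exact hM'nov e h hv
          · exact hD h
      · rintro ⟨he, hMD⟩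
        by_cases hv : v ∈ e
        · exact Or.inr ⟨⟨he, hv⟩, fun h => hMD (Or.inr h)⟩
        · refine Or.inl ⟨⟨he.1, fun x hx => ⟨he.2 x hx, fun hc => ?_⟩⟩, fun h => hMD (Or.inl h)⟩
          exact hv (by rwa [Set.mem_singleton_iff.mp hc] at hx)
    refine ⟨M' ∪ D, ?_, ?_, psi, ?_⟩
    · apply Set.union_subset
      · exact hM'sub.trans (innerE_mono G (Set.diff_subset))
      · exact fun e he => (hDN he).1
    · calc (M' ∪ D).ncard ≤ M'.ncard + D.ncard := Set.ncard_union_le _ _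
        _ ≤ n + 1 := by omega
    · rw [← hsetEq]
      exact hpsi

lemma resistance_le_of_base [Fintype V] {G : SimpleGraph V} (hG : IsCubic G) (S₀ : Set V)
    (phi₀ : Sym2 V → Fin 3) (h₀ : EProper (innerE G S₀) phi₀) :
    resistance G ≤ (Set.univ \ S₀).ncard := by
  obtain ⟨M, hMsub, hMcard, phi, hphi⟩ :=
    grow hG S₀ phi₀ h₀ (Set.univ \ S₀).ncard Set.univ (Set.subset_univ _) rfl
  rw [innerE_univ] at hMsub hphi
  have hmem : M.ncard ∈ {n | ∃ M : Set (Sym2 V), M ⊆ G.edgeSet ∧ M.ncard = n ∧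
      ∃ phi, IsProper3EdgeColoring (G.deleteEdges M) phi} := by
    refine ⟨M, hMsub, rfl, phi, ?_⟩
    intro e₁ h₁ e₂ h₂ hne hx
    rw [SimpleGraph.edgeSet_deleteEdges] at h₁ h₂
    exact hphi e₁ h₁ e₂ h₂ hne hx
  exact le_trans (Nat.sInf_le hmem) hMcard

lemma four_neighbors [Fintype V] {G : SimpleGraph V} (hG : IsCubic G) {u w₁ w₂ w₃ w₄ : V}
    (h1 : G.Adj u w₁) (h2 : G.Adj u w₂) (h3 : G.Adj u w₃) (h4 : G.Adj u w₄)
    (h12 : w₁ ≠ w₂) (h13 : w₁ ≠ w₃) (h14 : w₁ ≠ w₄)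
    (h23 : w₂ ≠ w₃) (h24 : w₂ ≠ w₄) (h34 : w₃ ≠ w₄) : False := by
  have hsub : ({w₁, w₂, w₃, w₄} : Set V) ⊆ G.neighborSet u := by
    intro z hz
    simp only [Set.mem_insert_iff, Set.mem_singleton_iff] at hz
    rcases hz with rfl | rfl | rfl | rfl <;> assumption
  have h4c : ({w₁, w₂, w₃, w₄} : Set V).ncard = 4 := by
    rw [Set.ncard_insert_of_notMem (by simp [h12, h13, h14]),
      Set.ncard_insert_of_notMem (by simp [h23, h24]),
      Set.ncard_insert_of_notMem (by simp [h34]), Set.ncard_singleton]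
  have hle := Set.ncard_le_ncard hsub (Set.toFinite _)
  rw [hG u, h4c] at hle
  omega

lemma base_path [Fintype V] {G : SimpleGraph V} (hG : IsCubic G) {v : V} (L : List V)
    (hnd : L.Nodup) (hch : List.Chain' G.Adj L) (hvL : v ∉ L) (hLne : L ≠ [])
    (hadj1 : G.Adj v (L.head hLne)) (hadj2 : G.Adj (L.getLast hLne) v) :
    ∃ phi, EProper (innerE G {x | x ∈ L}) phi := by
  classical
  set f : ℕ → V := fun i => L.getD i v with hfdef
  have hfget : ∀ (i : ℕ) (hi : i < L.length), f i = L.get ⟨i, hi⟩ := by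
    intro i hi
    show L.getD i v = _
    rw [List.getD_eq_getElem _ _ hi, List.get_eq_getElem]
  have hf_inj : ∀ i j, i < L.length → j < L.length → f i = f j → i = j := by
    intro i j hi hj h
    rw [hfget i hi, hfget j hj] at h
    have h2 := List.nodup_iff_injective_get.mp hnd h
    exact congrArg Fin.val h2
  have hfmem : ∀ i, i < L.length → f i ∈ L := by
    intro i hi
    rw [hfget i hi]
    exact List.get_mem L ⟨i, hi⟩
  have hfv : ∀ i, i < L.length → f i ≠ v := fun i hi h => hvL (h ▸ hfmem i hi)
  have hadj_next : ∀ k, k + 1 < L.length → G.Adj (f k) (f (k + 1)) := by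
    intro k hk
    have h := List.isChain_iff_getElem.mp hch k (by omega)
    rwa [hfget k (by omega), hfget (k + 1) (by omega), List.get_eq_getElem, List.get_eq_getElem]
  have hlen0 : 0 < L.length := List.length_pos_iff.mpr hLne
  have hheadf : L.head hLne = f 0 := by
    rw [hfget 0 hlen0, List.get_eq_getElem, List.head_eq_getElem_zero]
  have hlastf : L.getLast hLne = f (L.length - 1) := by
    rw [hfget _ (by omega), List.get_eq_getElem, List.getLast_eq_getElem]
  have hadj01 : G.Adj v (f 0) := hheadf ▸ hadj1
  have hadjlast : G.Adj (f (L.length - 1)) v := hlastf ▸ hadj2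
  have hL_f : ∀ x ∈ L, ∃ k, k < L.length ∧ f k = x := by
    intro x hx
    obtain ⟨k, hk, hkx⟩ := List.mem_iff_getElem.mp hx
    exact ⟨k, hk, by rw [hfget k hk, List.get_eq_getElem]; exact hkx⟩
  have hPuniq : ∀ (e : Sym2 V) (i j : ℕ), (i + 1 < L.length ∧ e = s(f i, f (i + 1))) →
      (j + 1 < L.length ∧ e = s(f j, f (j + 1))) → i = j := by
    rintro e i j ⟨hi, rfl⟩ ⟨hj, he⟩
    rw [Sym2.eq_iff] at he
    rcases he with ⟨h1, -⟩ | ⟨h1, h2⟩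
    · exact hf_inj _ _ (by omega) (by omega) h1
    · have e1 := hf_inj _ _ (by omega) (by omega) h1
      have e2 := hf_inj _ _ (by omega) (by omega) h2
      omega
  refine ⟨fun e => if h : ∃ i, i + 1 < L.length ∧ e = s(f i, f (i + 1)) then
    (if (Nat.find h) % 2 = 0 then (0 : Fin 3) else 1) else 2, ?_⟩
  -- helper for chords
  have hchord : ∀ (k : ℕ), k < L.length → ∀ (e : Sym2 V) (a' : V),
      e ∈ innerE G {x | x ∈ L} → e = s(f k, a') →
      (¬ ∃ i, i + 1 < L.length ∧ e = s(f i, f (i + 1))) →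
      a' ≠ v ∧ a' ∈ L ∧ G.Adj (f k) a' ∧ a' ≠ f k ∧
        (k + 1 < L.length → a' ≠ f (k + 1)) ∧ (0 < k → a' ≠ f (k - 1)) := by
    intro k hk e a' he heq hq
    subst heq
    have hadj : G.Adj (f k) a' := (SimpleGraph.mem_edgeSet G).mp he.1
    have ha'L : a' ∈ L := he.2 a' (by simp)
    refine ⟨fun h => hvL (h ▸ ha'L), ha'L, hadj, fun h => G.ne_of_adj hadj.symm h, ?_, ?_⟩
    · intro hk1 hc
      exact hq ⟨k, hk1, by rw [hc]⟩
    · intro hk0 hc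
      obtain ⟨m, rfl⟩ : ∃ m, k = m + 1 := ⟨k - 1, by omega⟩
      simp only [Nat.add_sub_cancel] at hc
      refine hq ⟨m, by omega, ?_⟩
      rw [hc, Sym2.eq_swap]
  intro e₁ h₁ e₂ h₂ hne hx
  obtain ⟨u, hu₁, hu₂⟩ := hx
  by_cases hq₁ : ∃ i, i + 1 < L.length ∧ e₁ = s(f i, f (i + 1)) <;>
    by_cases hq₂ : ∃ i, i + 1 < L.length ∧ e₂ = s(f i, f (i + 1))
  · -- both path edges
    simp only [dif_pos hq₁, dif_pos hq₂]
    have hPi := Nat.find_spec hq₁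
    have hPj := Nat.find_spec hq₂
    set i := Nat.find hq₁ with hidef
    set j := Nat.find hq₂ with hjdef
    have hij : i ≠ j := fun hc => hne (by rw [hPi.2, hPj.2, hc])
    have hu₁' : u = f i ∨ u = f (i + 1) := by
      rw [hPi.2, Sym2.mem_iff] at hu₁
      exact hu₁
    have hu₂' : u = f j ∨ u = f (j + 1) := by
      rw [hPj.2, Sym2.mem_iff] at hu₂
      exact hu₂
    have hconsec : j = i + 1 ∨ i = j + 1 := by
      rcases hu₁' with h | h <;> rcases hu₂' with h' | h' <;>
        · have := hf_inj _ _ (by omega) (by omega) (h.symm.trans h')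
          omega
    have hmod : i % 2 ≠ j % 2 := by omega
    split_ifs with ha hb hb
    · exact absurd hb (by omega)
    · decide
    · decide
    · exfalso
      omega
  · simp only [dif_pos hq₁, dif_neg hq₂]
    split_ifs <;> decide
  · simp only [dif_neg hq₁, dif_pos hq₂]
    split_ifs <;> decide
  · -- both chords: impossible
    exfalso
    obtain ⟨k, hk, hfk⟩ := hL_f u (h₁.2 u hu₁)
    obtain ⟨a', ha'⟩ := Sym2.mem_iff_exists.mp hu₁
    obtain ⟨b', hb'⟩ := Sym2.mem_iff_exists.mp hu₂
    rw [← hfk] at ha' hb'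
    obtain ⟨ha'v, ha'L, hadja, ha'u, ha'next, ha'prev⟩ := hchord k hk e₁ a' h₁ ha' hq₁
    obtain ⟨hb'v, hb'L, hadjb, hb'u, hb'next, hb'prev⟩ := hchord k hk e₂ b' h₂ hb' hq₂
    have hab : a' ≠ b' := by
      intro hc
      exact hne (by rw [ha', hb', hc])
    have hadjprev : 0 < k → G.Adj (f k) (f (k - 1)) := by
      intro hk0
      obtain ⟨m, rfl⟩ : ∃ m, k = m + 1 := ⟨k - 1, by omega⟩
      simp only [Nat.add_sub_cancel]
      exact (hadj_next m (by omega)).symm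
    by_cases hknext : k + 1 < L.length <;> by_cases hk0 : 0 < k
    · -- middle vertex
      exact four_neighbors hG hadja hadjb (hadj_next k hknext) (hadjprev hk0)
        hab (ha'next hknext) (ha'prev hk0)
        (hb'next hknext) (hb'prev hk0)
        (by
          intro hc
          have := hf_inj (k + 1) (k - 1) hknext (by omega) hc
          omega)
    · -- k = 0, has next
      have hadjuv : G.Adj (f k) v := by
        have : k = 0 := by omega
        rw [this]
        exact hadj01.symm
      exact four_neighbors hG hadja hadjb (hadj_next k hknext) hadjuv
        hab (ha'next hknext) ha'v (hb'next hknext) hb'v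
        (fun hc => hfv (k + 1) hknext hc)
    · -- k last, has prev
      have hadjuv : G.Adj (f k) v := by
        have hke : k = L.length - 1 := by omega
        rw [hke]
        exact hadjlast
      exact four_neighbors hG hadja hadjb (hadjprev hk0) hadjuv
        hab (ha'prev hk0) ha'v (hb'prev hk0) hb'v
        (hfv (k - 1) (by omega))
    · -- length 1
      have hlen1 : L.length = 1 := by omega
      obtain ⟨m, hm, hma⟩ := hL_f a' ha'L
      have : m = k := by omega
      subst this
      exact ha'u hma.symm

lemma cycle_resistance_bound [Fintype V] {G : SimpleGraph V} (hG : IsCubic G) {v : V}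
    (w : G.Walk v v) (hc : w.IsCycle) :
    resistance G + w.length ≤ Fintype.card V + 1 := by
  classical
  have hlen3 := hc.three_le_length
  set T := w.support.tail with hT
  have hTlen : T.length = w.length := by
    rw [hT]
    simp [SimpleGraph.Walk.length_support]
  have hTnd : T.Nodup := hc.support_nodup
  have hTne : T ≠ [] := by
    intro h
    rw [h] at hTlen
    simp at hTlen
    omega
  have hTlast : T.getLast hTne = v := by
    show w.support.tail.getLast hTne = v
    rw [List.getLast_tail]
    exact w.getLast_support
  set L := T.dropLast with hLdef
  have hTeq : L ++ [v] = T := by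
    rw [hLdef, ← hTlast]
    exact List.dropLast_append_getLast hTne
  have hLnd : L.Nodup := List.Nodup.sublist (List.dropLast_sublist T) hTnd
  have hvL : v ∉ L := by
    intro hv
    have hnd2 : (L ++ [v]).Nodup := hTeq ▸ hTnd
    rw [List.nodup_append] at hnd2
    exact hnd2.2.2 v hv v (by simp) rfl
  have hLlen : L.length = w.length - 1 := by
    rw [hLdef, List.length_dropLast, hTlen]
  have hLne : L ≠ [] := by
    intro h
    rw [h] at hLlen
    simp at hLlen
    omega
  have hchainS : List.Chain' G.Adj w.support := w.isChain_adj_support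
  have hsupp : w.support = v :: (L ++ [v]) := by
    rw [hTeq, hT]
    exact w.support_eq_cons
  rw [hsupp] at hchainS
  change List.IsChain G.Adj (v :: (L ++ [v])) at hchainS
  rw [List.isChain_cons] at hchainS
  obtain ⟨hhead, hchainT⟩ := hchainS
  rw [List.isChain_append] at hchainT
  obtain ⟨hchL, -, hlastadj⟩ := hchainT
  have hadj1 : G.Adj v (L.head hLne) := by
    apply hhead
    rw [List.head?_append, List.head?_eq_head hLne]
    rfl
  have hadj2 : G.Adj (L.getLast hLne) v := by
    apply hlastadj
    · rw [List.getLast?_eq_getLast hLne]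
      rfl
    · simp
  obtain ⟨phi₀, h₀⟩ := base_path hG L hLnd hchL hvL hLne hadj1 hadj2
  have hres := resistance_le_of_base hG {x | x ∈ L} phi₀ h₀
  have hsetL : ({x | x ∈ L} : Set V) = ↑L.toFinset := by
    ext x
    simp
  have hLcard : ({x | x ∈ L} : Set V).ncard = L.length := by
    rw [hsetL, Set.ncard_coe_finset, List.toFinset_card_of_nodup hLnd]
  have hLle : L.length ≤ Fintype.card V := List.Nodup.length_le_card hLnd
  have hdiff : (Set.univ \ {x | x ∈ L} : Set V).ncard =
      Fintype.card V - L.length := by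
    rw [Set.ncard_diff (Set.subset_univ _) (Set.toFinite _), hLcard, Set.ncard_univ,
      Nat.card_eq_fintype_card]
  rw [hdiff] at hres
  omega

end Aux

theorem stmt12 {V : Type*} [Fintype V] (G : SimpleGraph V) (hG : IsCubic G) :
    circumference G ≤ Fintype.card V - resistance G + 1 ∧
    resistance G ≤ Fintype.card V - circumference G + 1 := by
  classical
  set n := Fintype.card V with hn
  set S := {k | ∃ (v : V) (w : G.Walk v v), w.IsCycle ∧ w.length = k} with hS
  have hcircS : circumference G = sSup S := rfl
  have hub : ∀ k ∈ S, k ≤ n := by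
    rintro k ⟨v, w, hc, rfl⟩
    have hnd := hc.support_nodup
    have hle := List.Nodup.length_le_card hnd
    have hlen : w.support.tail.length = w.length := by
      simp [SimpleGraph.Walk.length_support]
    omega
  have hr_le_n : resistance G ≤ n := by
    have hempty : innerE G (∅ : Set V) = ∅ := by
      ext e
      simp only [innerE, Set.mem_setOf_eq, Set.mem_empty_iff_false, iff_false]
      rintro ⟨-, hall⟩
      induction e using Sym2.ind with
      | _ x y => exact hall x (by simp)
    have h₀ : EProper (innerE G (∅ : Set V)) (fun _ => 0) := by
      rw [hempty]
      intro e he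
      exact absurd he (by simp)
    have hres := resistance_le_of_base hG ∅ _ h₀
    rw [Set.diff_empty, Set.ncard_univ, Nat.card_eq_fintype_card] at hres
    exact hres
  rcases Set.eq_empty_or_nonempty S with hSe | hSne
  · rw [hcircS, hSe, csSup_empty]
    simp only [Nat.bot_eq_zero]
    omega
  · have hmem : sSup S ∈ S := Nat.sSup_mem hSne ⟨n, fun k hk => hub k hk⟩
    obtain ⟨v, w, hc, hlen⟩ := hmem
    have hbound := cycle_resistance_bound hG w hc
    rw [hlen] at hbound
    have hcn : sSup S ≤ n := hub _ ⟨v, w, hc, hlen⟩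
    rw [hcircS]
    omega
end
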